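/- arXiv:0707.3360 — 5 statements merged into one kernel-verified Lean document; each statement's English description precedes it below -/
import Mathlib

section
/- Let V be a real vector space, P an endomorphism of V with P^2 = Id, and g a symmetric bilinear form on V with g(Px, Py) = -g(x,y). On V ⊕ V define the Sasaki-type form G((x1,y1),(x2,y2)) = g(x1,x2) + g(y1,y2), and endomorphisms J1(x,y) = (-y,x), J2(x,y) = (Py, Px), J3(x,y) = (Px, -Py). Then G(J1 u, J1 w) = G(u,w), G(J2 u, J2 w) = -G(u,w), and G(J3 u, J3 w) = -G(u,w) for all u, w in V ⊕ V. -/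
/-- Pointwise content of the Sasaki metric being para-hyperhermitian on the
tangent bundle of an almost para-hermitian manifold. -/
theorem stmt5 {V : Type*} [AddCommGroup V] [Module ℝ V]
    (P : Module.End ℝ V) (hP : P ^ 2 = 1)
    (g : LinearMap.BilinForm ℝ V) (hsymm : ∀ X Y, g X Y = g Y X)
    (hPg : ∀ X Y, g (P X) (P Y) = -g X Y) :
    let G : V × V → V × V → ℝ := fun u w => g u.1 w.1 + g u.2 w.2
    let J1 : V × V → V × V := fun u => (-u.2, u.1)
    let J2 : V × V → V × V := fun u => (P u.2, P u.1)
    let J3 : V × V → V × V := fun u => (P u.1, -P u.2)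
    (∀ u w, G (J1 u) (J1 w) = G u w) ∧
    (∀ u w, G (J2 u) (J2 w) = -G u w) ∧
    (∀ u w, G (J3 u) (J3 w) = -G u w) := by
  intro G J1 J2 J3
  refine ⟨fun u w => ?_, fun u w => ?_, fun u w => ?_⟩ <;>
    simp [G, J1, J2, J3, hPg] <;> ring
end

section
/- Let V be a real vector space with endomorphism φ, vector ξ ∈ V, and linear functional η on V satisfying φ^2 = -ε·Id + η ⊗ ξ and η(ξ) = ε, where ε = 1 or ε = -1. Then φ(ξ) = 0 and η ∘ φ = 0. -/
/-- For an almost contact structure (`ε = 1`) or a Lorentzian almost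
paracontact structure (`ε = -1`), the identities `φ ξ = 0` and `η ∘ φ = 0`
follow from `φ² = -ε Id + η ⊗ ξ` and `η(ξ) = ε`. -/
theorem stmt8 {V : Type*} [AddCommGroup V] [Module ℝ V]
    (φ : Module.End ℝ V) (ξ : V) (η : V →ₗ[ℝ] ℝ) (ε : ℝ)
    (hε : ε = 1 ∨ ε = -1)
    (hφ : ∀ X, φ (φ X) = -(ε • X) + η X • ξ)
    (hη : η ξ = ε) :
    φ ξ = 0 ∧ ∀ X, η (φ X) = 0 := by
  have hε2 : ε * ε = 1 := by rcases hε with h | h <;> simp [h]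
  have hεne : ε ≠ 0 := by rcases hε with h | h <;> simp [h]
  have hξne : ξ ≠ 0 := by
    intro h
    rw [h] at hη
    simp at hη
    exact hεne hη.symm
  -- φ²ξ = 0
  have h1 : φ (φ ξ) = 0 := by
    rw [hφ ξ, hη]
    abel
  -- φξ = ε • η(φξ) • ξ
  have h2 : (ε * η (φ ξ)) • ξ = φ ξ := by
    have := hφ (φ ξ)
    rw [h1, map_zero] at this
    have h3 : ε • φ ξ = η (φ ξ) • ξ := by
      have h := this.symm
      rwa [neg_add_eq_zero] at h
    calc (ε * η (φ ξ)) • ξ = ε • (η (φ ξ) • ξ) := by rw [mul_smul]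
      _ = ε • ε • φ ξ := by rw [← h3]
      _ = (ε * ε) • φ ξ := by rw [mul_smul]
      _ = φ ξ := by rw [hε2, one_smul]
  have ha : η (φ ξ) = 0 := by
    have h4 : (η (φ ξ) * η (φ ξ)) • ξ = 0 := by
      calc (η (φ ξ) * η (φ ξ)) • ξ = ((ε * η (φ ξ)) * (ε * η (φ ξ))) • ξ := by
            congr 1; rw [show (ε * η (φ ξ)) * (ε * η (φ ξ)) = (ε * ε) * (η (φ ξ) * η (φ ξ)) by ring, hε2, one_mul]
        _ = (ε * η (φ ξ)) • ((ε * η (φ ξ)) • ξ) := (smul_smul _ _ _).symm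
        _ = (ε * η (φ ξ)) • φ ξ := by rw [h2]
        _ = φ ((ε * η (φ ξ)) • ξ) := (map_smul φ _ _).symm
        _ = φ (φ ξ) := by rw [h2]
        _ = 0 := h1
    rcases smul_eq_zero.mp h4 with h | h
    · exact mul_self_eq_zero.mp h
    · exact absurd h hξne
  have hφξ : φ ξ = 0 := by rw [← h2, ha, mul_zero, zero_smul]
  refine ⟨hφξ, fun X => ?_⟩
  have e1 : φ (φ (φ X)) = -(ε • φ X) + η (φ X) • ξ := hφ (φ X)
  have e2 : φ (φ (φ X)) = -(ε • φ X) := by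
    rw [hφ X, map_add, map_neg, map_smul, map_smul, hφξ, smul_zero, add_zero]
  rw [e2] at e1
  have : η (φ X) • ξ = 0 := by
    have := e1.symm
    rwa [add_eq_left] at this
  rcases smul_eq_zero.mp this with h | h
  · exact h
  · exact absurd h hξne
end

section
/- Let V be a real vector space with a mixed 3-structure (φ_α, ξ_α, η_α)_{α=1,2,3}, and let h be a symmetric bilinear form on V satisfying h(X, ξ_α) = η_α(X) for α = 1,2,3. Define g(X,Y) = (1/4)[h(X,Y) + Σ_{α=1}^{3} ε_α (h(φ_α X, φ_α Y) + η_α(X)η_α(Y))], with ε_1 = 1, ε_2 = ε_3 = -1. Then g is symmetric, g(X, ξ_α) = η_α(X), and g(φ_α X, φ_α Y) = ε_α g(X,Y) - η_α(X)η_α(Y) for all X, Y ∈ V and α = 1,2,3. -/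
/-- A mixed 3-structure on a real vector space `V`: `(φ1,ξ1,η1)` is an almost
contact structure, `(φ2,ξ2,η2)` and `(φ3,ξ3,η3)` are Lorentzian almost
paracontact structures, together with all cross-compatibility relations for
the even permutations of `(1,2,3)`, where `ε1 = 1`, `ε2 = ε3 = -1`. -/
structure MixedThreeStructure (V : Type*) [AddCommGroup V] [Module ℝ V] where
  φ1 : Module.End ℝ V
  φ2 : Module.End ℝ V
  φ3 : Module.End ℝ V
  ξ1 : V
  ξ2 : V
  ξ3 : V
  η1 : V →ₗ[ℝ] ℝ
  η2 : V →ₗ[ℝ] ℝ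
  η3 : V →ₗ[ℝ] ℝ
  sq1 : ∀ X, φ1 (φ1 X) = -X + η1 X • ξ1
  n1 : η1 ξ1 = 1
  sq2 : ∀ X, φ2 (φ2 X) = X + η2 X • ξ2
  n2 : η2 ξ2 = -1
  sq3 : ∀ X, φ3 (φ3 X) = X + η3 X • ξ3
  n3 : η3 ξ3 = -1
  o12 : η1 ξ2 = 0
  o13 : η1 ξ3 = 0
  o21 : η2 ξ1 = 0
  o23 : η2 ξ3 = 0
  o31 : η3 ξ1 = 0
  o32 : η3 ξ2 = 0
  p12 : φ1 ξ2 = -ξ3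
  p21 : φ2 ξ1 = ξ3
  p23 : φ2 ξ3 = ξ1
  p32 : φ3 ξ2 = -ξ1
  p31 : φ3 ξ1 = -ξ2
  p13 : φ1 ξ3 = ξ2
  q12 : ∀ X, η1 (φ2 X) = -η3 X
  q21 : ∀ X, η2 (φ1 X) = η3 X
  q23 : ∀ X, η2 (φ3 X) = η1 X
  q32 : ∀ X, η3 (φ2 X) = -η1 X
  q31 : ∀ X, η3 (φ1 X) = -η2 X
  q13 : ∀ X, η1 (φ3 X) = η2 X
  r12 : ∀ X, φ1 (φ2 X) - η2 X • ξ1 = -φ3 X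
  r21 : ∀ X, -φ2 (φ1 X) + η1 X • ξ2 = -φ3 X
  r23 : ∀ X, φ2 (φ3 X) - η3 X • ξ2 = φ1 X
  r32 : ∀ X, -φ3 (φ2 X) + η2 X • ξ3 = φ1 X
  r31 : ∀ X, φ3 (φ1 X) - η1 X • ξ3 = -φ2 X
  r13 : ∀ X, -φ1 (φ3 X) + η3 X • ξ1 = -φ2 X

/-- Final averaging step: from a symmetric bilinear form `h` with
`h(X, ξ_α) = η_α(X)`, the form
`g(X,Y) = ¼[h(X,Y) + Σ_α ε_α (h(φ_α X, φ_α Y) + η_α(X)η_α(Y))]`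
is a compatible metric for the mixed 3-structure. -/
theorem stmt10 {V : Type*} [AddCommGroup V] [Module ℝ V]
    (M : MixedThreeStructure V)
    (h : LinearMap.BilinForm ℝ V) (hsymm : ∀ X Y, h X Y = h Y X)
    (hξ1 : ∀ X, h X M.ξ1 = M.η1 X)
    (hξ2 : ∀ X, h X M.ξ2 = M.η2 X)
    (hξ3 : ∀ X, h X M.ξ3 = M.η3 X)
    (g : V → V → ℝ)
    (hg : ∀ X Y, g X Y = (1 / 4) *
      (h X Y + (h (M.φ1 X) (M.φ1 Y) + M.η1 X * M.η1 Y)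
             - (h (M.φ2 X) (M.φ2 Y) + M.η2 X * M.η2 Y)
             - (h (M.φ3 X) (M.φ3 Y) + M.η3 X * M.η3 Y)) ) :
    (∀ X Y, g X Y = g Y X) ∧
    (∀ X, g X M.ξ1 = M.η1 X) ∧ (∀ X, g X M.ξ2 = M.η2 X) ∧ (∀ X, g X M.ξ3 = M.η3 X) ∧
    (∀ X Y, g (M.φ1 X) (M.φ1 Y) = g X Y - M.η1 X * M.η1 Y) ∧
    (∀ X Y, g (M.φ2 X) (M.φ2 Y) = -g X Y - M.η2 X * M.η2 Y) ∧
    (∀ X Y, g (M.φ3 X) (M.φ3 Y) = -g X Y - M.η3 X * M.η3 Y) := by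
  -- symmetric versions of hξ
  have hs1 : ∀ X, h M.ξ1 X = M.η1 X := fun X => (hsymm _ _).trans (hξ1 X)
  have hs2 : ∀ X, h M.ξ2 X = M.η2 X := fun X => (hsymm _ _).trans (hξ2 X)
  have hs3 : ∀ X, h M.ξ3 X = M.η3 X := fun X => (hsymm _ _).trans (hξ3 X)
  -- fixed points: φα ξα = 0
  have fix1 : M.φ1 M.ξ1 = 0 := by
    have h1 := M.r21 M.ξ1
    rw [M.n1, M.p31] at h1
    have h2 : M.φ2 (M.φ1 M.ξ1) = 0 := by
      linear_combination (norm := module) -h1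
    have h3 := M.sq2 (M.φ1 M.ξ1)
    rw [h2, M.q21, M.o31] at h3
    simpa using h3.symm
  have fix2 : M.φ2 M.ξ2 = 0 := by
    have h1 := M.r12 M.ξ2
    rw [M.n2, M.p32] at h1
    have h2 : M.φ1 (M.φ2 M.ξ2) = 0 := by
      linear_combination (norm := module) h1
    have h3 := M.sq1 (M.φ2 M.ξ2)
    rw [h2, M.q12, M.o32] at h3
    simpa using h3.symm
  have fix3 : M.φ3 M.ξ3 = 0 := by
    have h1 := M.r13 M.ξ3
    rw [M.n3, M.p23] at h1
    have h2 : M.φ1 (M.φ3 M.ξ3) = 0 := by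
      linear_combination (norm := module) -h1
    have h3 := M.sq1 (M.φ3 M.ξ3)
    rw [h2, M.q13, M.o23] at h3
    simpa using h3.symm
  -- ηα ∘ φα = 0
  have z1 : ∀ X, M.η1 (M.φ1 X) = 0 := by
    intro X
    have a := M.sq1 (M.φ1 X)
    have b : M.φ1 (M.φ1 (M.φ1 X)) = -M.φ1 X := by
      rw [M.sq1 X]; simp [fix1]
    have c : M.η1 (M.φ1 X) • M.ξ1 = 0 := by
      linear_combination (norm := module) b - a
    have := congrArg M.η1 c
    simpa [M.n1] using this
  have z2 : ∀ X, M.η2 (M.φ2 X) = 0 := by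
    intro X
    have a := M.sq2 (M.φ2 X)
    have b : M.φ2 (M.φ2 (M.φ2 X)) = M.φ2 X := by
      rw [M.sq2 X]; simp [fix2]
    have c : M.η2 (M.φ2 X) • M.ξ2 = 0 := by
      linear_combination (norm := module) b - a
    have := congrArg M.η2 c
    simp [M.n2] at this
    linarith
  have z3 : ∀ X, M.η3 (M.φ3 X) = 0 := by
    intro X
    have a := M.sq3 (M.φ3 X)
    have b : M.φ3 (M.φ3 (M.φ3 X)) = M.φ3 X := by
      rw [M.sq3 X]; simp [fix3]
    have c : M.η3 (M.φ3 X) • M.ξ3 = 0 := by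
      linear_combination (norm := module) b - a
    have := congrArg M.η3 c
    simp [M.n3] at this
    linarith
  -- composition formulas
  have c21 : ∀ X, M.φ2 (M.φ1 X) = M.φ3 X + M.η1 X • M.ξ2 := by
    intro X; linear_combination (norm := module) -(M.r21 X)
  have c31 : ∀ X, M.φ3 (M.φ1 X) = -M.φ2 X + M.η1 X • M.ξ3 := by
    intro X; linear_combination (norm := module) M.r31 X
  have c12 : ∀ X, M.φ1 (M.φ2 X) = -M.φ3 X + M.η2 X • M.ξ1 := by
    intro X; linear_combination (norm := module) M.r12 X
  have c32 : ∀ X, M.φ3 (M.φ2 X) = -M.φ1 X + M.η2 X • M.ξ3 := by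
    intro X; linear_combination (norm := module) -(M.r32 X)
  have c13 : ∀ X, M.φ1 (M.φ3 X) = M.φ2 X + M.η3 X • M.ξ1 := by
    intro X; linear_combination (norm := module) -(M.r13 X)
  have c23 : ∀ X, M.φ2 (M.φ3 X) = M.φ1 X + M.η3 X • M.ξ2 := by
    intro X; linear_combination (norm := module) M.r23 X
  refine ⟨?_, ?_, ?_, ?_, ?_, ?_, ?_⟩
  · intro X Y
    rw [hg, hg, hsymm X Y, hsymm (M.φ1 X), hsymm (M.φ2 X), hsymm (M.φ3 X)]
    ring
  · intro X
    rw [hg]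
    simp only [fix1, M.p21, M.p31, map_zero, map_neg, hξ1, hξ2, hξ3, M.n1, M.o21, M.o31,
      M.q32, M.q23]
    ring
  · intro X
    rw [hg]
    simp only [fix2, M.p12, M.p32, map_zero, map_neg, hξ1, hξ2, hξ3, M.n2, M.o12, M.o32,
      M.q31, M.q13]
    ring
  · intro X
    rw [hg]
    simp only [fix3, M.p13, M.p23, map_zero, map_neg, hξ1, hξ2, hξ3, M.n3, M.o13, M.o23,
      M.q21, M.q12]
    ring
  · intro X Y
    rw [hg, hg]
    simp only [M.sq1 X, M.sq1 Y, c21, c31, map_add, map_neg, map_smul, LinearMap.add_apply,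
      LinearMap.neg_apply, LinearMap.smul_apply, smul_eq_mul, hξ1, hξ2, hξ3, hs1, hs2, hs3,
      M.q12, M.q21, M.q13, M.q31, M.q23, M.q32, z1, z2, z3, M.n1, M.n2, M.n3,
      M.o12, M.o13, M.o21, M.o23, M.o31, M.o32]
    ring
  · intro X Y
    rw [hg, hg]
    simp only [M.sq2 X, M.sq2 Y, c12, c32, map_add, map_neg, map_smul, LinearMap.add_apply,
      LinearMap.neg_apply, LinearMap.smul_apply, smul_eq_mul, hξ1, hξ2, hξ3, hs1, hs2, hs3,
      M.q12, M.q21, M.q13, M.q31, M.q23, M.q32, z1, z2, z3, M.n1, M.n2, M.n3,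
      M.o12, M.o13, M.o21, M.o23, M.o31, M.o32]
    ring
  · intro X Y
    rw [hg, hg]
    simp only [M.sq3 X, M.sq3 Y, c13, c23, map_add, map_neg, map_smul, LinearMap.add_apply,
      LinearMap.neg_apply, LinearMap.smul_apply, smul_eq_mul, hξ1, hξ2, hξ3, hs1, hs2, hs3,
      M.q12, M.q21, M.q13, M.q31, M.q23, M.q32, z1, z2, z3, M.n1, M.n2, M.n3,
      M.o12, M.o13, M.o21, M.o23, M.o31, M.o32]
    ring
end

section
/- Let V be a real vector space with a mixed 3-structure (φ_α, ξ_α, η_α)_{α=1,2,3}. On V ⊕ R define, for each α and a nonzero real constant f, the endomorphism J_α(X, t) = (φ_α X + (t/f)·ξ_α, -f·η_α(X)). Then J1^2 = -Id, J2^2 = J3^2 = Id, and J2 ∘ J1 = -J1 ∘ J2 = J3; i.e., (J1, J2, J3) is an almost para-hypercomplex structure on V ⊕ R. -/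
private lemma aux_neg_add {G : Type*} [AddCommGroup G] {a b c : G}
    (h : -a + b = -c) : a = c + b := by
  have h1 : b - a = -c := by rw [sub_eq_neg_add]; exact h
  have h2 : a - b = c := by rw [← neg_sub b a, h1, neg_neg]
  exact eq_add_of_sub_eq h2

/-- Pointwise content of the theorem that `M × ℝ` admits an almost
para-hyperhermitian structure: on `V ⊕ ℝ` the endomorphisms
`J_α(X,t) = (φ_α X + (t/f) ξ_α, -f η_α(X))` form an almost para-hypercomplex
structure. -/
theorem stmt11 {V : Type*} [AddCommGroup V] [Module ℝ V]
    (M : MixedThreeStructure V) (f : ℝ) (hf : f ≠ 0) :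
    let J1 : V × ℝ → V × ℝ := fun u => (M.φ1 u.1 + (u.2 / f) • M.ξ1, -(f * M.η1 u.1))
    let J2 : V × ℝ → V × ℝ := fun u => (M.φ2 u.1 + (u.2 / f) • M.ξ2, -(f * M.η2 u.1))
    let J3 : V × ℝ → V × ℝ := fun u => (M.φ3 u.1 + (u.2 / f) • M.ξ3, -(f * M.η3 u.1))
    (∀ u, J1 (J1 u) = -u) ∧ (∀ u, J2 (J2 u) = u) ∧ (∀ u, J3 (J3 u) = u) ∧
    (∀ u, J2 (J1 u) = J3 u) ∧ (∀ u, J1 (J2 u) = -J3 u) := by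
  have e3 : ∀ X, M.η3 (M.φ3 X) = 0 := by
    intro X
    have h2 : ∀ Y, M.η3 (M.φ3 (M.φ1 Y)) = 0 := by
      intro Y
      have h : M.φ3 (M.φ1 Y) = -M.φ2 Y + M.η1 Y • M.ξ3 :=
        eq_add_of_sub_eq (M.r31 Y)
      rw [h, map_add, map_neg, map_smul, M.q32, M.n3]
      simp
    have hX : X = -M.φ1 (M.φ1 X) + M.η1 X • M.ξ1 := by
      rw [M.sq1 X]; abel
    conv_lhs => rw [hX]
    rw [map_add, map_add, map_neg, map_neg, map_smul, map_smul, h2, M.p31,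
      map_neg, M.o32]
    simp
  have e1 : ∀ X, M.η1 (M.φ1 X) = 0 := by
    intro X
    have h : M.φ2 (M.φ3 X) = M.φ1 X + M.η3 X • M.ξ2 := eq_add_of_sub_eq (M.r23 X)
    have h1 := congrArg M.η1 h
    rw [M.q12, map_add, map_smul, M.o12, e3] at h1
    simpa using h1.symm
  have e2 : ∀ X, M.η2 (M.φ2 X) = 0 := by
    intro X
    have h' : M.φ1 (M.φ3 X) = M.φ2 X + M.η3 X • M.ξ1 := aux_neg_add (M.r13 X)
    have h : M.φ2 X = M.φ1 (M.φ3 X) - M.η3 X • M.ξ1 := eq_sub_of_add_eq h'.symm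
    rw [h, map_sub, map_smul, M.q21, M.o21, e3]
    simp
  have z1 : M.φ1 M.ξ1 = 0 := by
    have a : M.φ1 (M.φ1 M.ξ1) = 0 := by rw [M.sq1, M.n1]; simp
    have b := M.sq1 (M.φ1 M.ξ1)
    rw [a, map_zero, e1] at b
    simpa using b.symm
  have z2 : M.φ2 M.ξ2 = 0 := by
    have a : M.φ2 (M.φ2 M.ξ2) = 0 := by rw [M.sq2, M.n2]; simp
    have b := M.sq2 (M.φ2 M.ξ2)
    rw [a, map_zero, e2] at b
    simpa using b.symm
  have z3 : M.φ3 M.ξ3 = 0 := by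
    have a : M.φ3 (M.φ3 M.ξ3) = 0 := by rw [M.sq3, M.n3]; simp
    have b := M.sq3 (M.φ3 M.ξ3)
    rw [a, map_zero, e3] at b
    simpa using b.symm
  refine ⟨fun u => ?_, fun u => ?_, fun u => ?_, fun u => ?_, fun u => ?_⟩
  · refine Prod.ext ?_ ?_
    · show M.φ1 (M.φ1 u.1 + (u.2 / f) • M.ξ1) + (-(f * M.η1 u.1) / f) • M.ξ1 = (-u).1
      rw [map_add, map_smul, M.sq1 u.1, z1, Prod.fst_neg]
      have hc : (-(f * M.η1 u.1) / f) = -M.η1 u.1 := by rw [neg_div, mul_div_cancel_left₀ _ hf]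
      rw [hc]
      module
    · show -(f * M.η1 (M.φ1 u.1 + (u.2 / f) • M.ξ1)) = (-u).2
      rw [map_add, map_smul, e1, M.n1, Prod.snd_neg]
      simp only [smul_eq_mul, zero_add]
      field_simp
  · refine Prod.ext ?_ ?_
    · show M.φ2 (M.φ2 u.1 + (u.2 / f) • M.ξ2) + (-(f * M.η2 u.1) / f) • M.ξ2 = u.1
      rw [map_add, map_smul, M.sq2 u.1, z2]
      have hc : (-(f * M.η2 u.1) / f) = -M.η2 u.1 := by rw [neg_div, mul_div_cancel_left₀ _ hf]
      rw [hc]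
      module
    · show -(f * M.η2 (M.φ2 u.1 + (u.2 / f) • M.ξ2)) = u.2
      rw [map_add, map_smul, e2, M.n2]
      simp only [smul_eq_mul, zero_add]
      field_simp
  · refine Prod.ext ?_ ?_
    · show M.φ3 (M.φ3 u.1 + (u.2 / f) • M.ξ3) + (-(f * M.η3 u.1) / f) • M.ξ3 = u.1
      rw [map_add, map_smul, M.sq3 u.1, z3]
      have hc : (-(f * M.η3 u.1) / f) = -M.η3 u.1 := by rw [neg_div, mul_div_cancel_left₀ _ hf]
      rw [hc]
      module
    · show -(f * M.η3 (M.φ3 u.1 + (u.2 / f) • M.ξ3)) = u.2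
      rw [map_add, map_smul, e3, M.n3]
      simp only [smul_eq_mul, zero_add]
      field_simp
  · refine Prod.ext ?_ ?_
    · show M.φ2 (M.φ1 u.1 + (u.2 / f) • M.ξ1) + (-(f * M.η1 u.1) / f) • M.ξ2
        = M.φ3 u.1 + (u.2 / f) • M.ξ3
      have h21 : M.φ2 (M.φ1 u.1) = M.φ3 u.1 + M.η1 u.1 • M.ξ2 := aux_neg_add (M.r21 u.1)
      rw [map_add, map_smul, h21, M.p21]
      have hc : (-(f * M.η1 u.1) / f) = -M.η1 u.1 := by rw [neg_div, mul_div_cancel_left₀ _ hf]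
      rw [hc]
      module
    · show -(f * M.η2 (M.φ1 u.1 + (u.2 / f) • M.ξ1)) = -(f * M.η3 u.1)
      rw [map_add, map_smul, M.q21, M.o21]
      simp
  · refine Prod.ext ?_ ?_
    · show M.φ1 (M.φ2 u.1 + (u.2 / f) • M.ξ2) + (-(f * M.η2 u.1) / f) • M.ξ1
        = (-(M.φ3 u.1 + (u.2 / f) • M.ξ3, -(f * M.η3 u.1))).1
      have h12 : M.φ1 (M.φ2 u.1) = -M.φ3 u.1 + M.η2 u.1 • M.ξ1 :=
        eq_add_of_sub_eq (M.r12 u.1)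
      rw [Prod.fst_neg, map_add, map_smul, h12, M.p12]
      have hc : (-(f * M.η2 u.1) / f) = -M.η2 u.1 := by rw [neg_div, mul_div_cancel_left₀ _ hf]
      rw [hc]
      module
    · show -(f * M.η1 (M.φ2 u.1 + (u.2 / f) • M.ξ2))
        = (-(M.φ3 u.1 + (u.2 / f) • M.ξ3, -(f * M.η3 u.1))).2
      rw [Prod.snd_neg, map_add, map_smul, M.q12, M.o12]
      simp
end

section
/- Let V be a real vector space with a mixed 3-structure (φ_α, ξ_α, η_α)_{α=1,2,3} on V and the structure (φ'_α, ξ'_α, η'_α) on V ⊕ W defined by φ'_α(v,w) = (φ_α v, J_α w), ξ'_α = (ξ_α, 0), η'_α(v,w) = η_α(v), where (J_1, J_2, J_3) is an almost para-hypercomplex structure on W (J1^2 = -Id, J2^2 = J3^2 = Id, J2 J1 = -J1 J2 = J3). Then (φ'_α, ξ'_α, η'_α)_{α=1,2,3} is a mixed 3-structure on V ⊕ W. -/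
/-- A mixed 3-structure on `V` and an almost para-hypercomplex structure
`(J1,J2,J3)` on `W` combine to a mixed 3-structure on `V ⊕ W` via
`φ'_α(v,w) = (φ_α v, J_α w)`, `ξ'_α = (ξ_α, 0)`, `η'_α(v,w) = η_α(v)`. -/
theorem stmt18 {V W : Type*} [AddCommGroup V] [Module ℝ V]
    [AddCommGroup W] [Module ℝ W]
    (M : MixedThreeStructure V)
    (J1 J2 J3 : Module.End ℝ W)
    (h1 : J1 ^ 2 = -1) (h2 : J2 ^ 2 = 1) (h3 : J3 ^ 2 = 1)
    (h21 : J2 * J1 = J3) (h12 : J1 * J2 = -J3) :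
    ∃ S : MixedThreeStructure (V × W),
      (∀ p : V × W, S.φ1 p = (M.φ1 p.1, J1 p.2)) ∧
      (∀ p : V × W, S.φ2 p = (M.φ2 p.1, J2 p.2)) ∧
      (∀ p : V × W, S.φ3 p = (M.φ3 p.1, J3 p.2)) ∧
      S.ξ1 = (M.ξ1, 0) ∧ S.ξ2 = (M.ξ2, 0) ∧ S.ξ3 = (M.ξ3, 0) ∧
      (∀ p : V × W, S.η1 p = M.η1 p.1) ∧
      (∀ p : V × W, S.η2 p = M.η2 p.1) ∧
      (∀ p : V × W, S.η3 p = M.η3 p.1) := by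

  have e11 : ∀ w, J1 (J1 w) = -w := fun w => by
    have := DFunLike.congr_fun h1 w
    simpa [pow_two, Module.End.mul_apply] using this
  have e22 : ∀ w, J2 (J2 w) = w := fun w => by
    have := DFunLike.congr_fun h2 w
    simpa [pow_two, Module.End.mul_apply] using this
  have e33 : ∀ w, J3 (J3 w) = w := fun w => by
    have := DFunLike.congr_fun h3 w
    simpa [pow_two, Module.End.mul_apply] using this
  have e21 : ∀ w, J2 (J1 w) = J3 w := fun w => by
    have := DFunLike.congr_fun h21 w
    simpa [Module.End.mul_apply] using this
  have e12 : ∀ w, J1 (J2 w) = -(J3 w) := fun w => by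
    have := DFunLike.congr_fun h12 w
    simpa [Module.End.mul_apply] using this
  have e23 : ∀ w, J2 (J3 w) = J1 w := fun w => by
    rw [← e21 w, e22]
  have e32 : ∀ w, J3 (J2 w) = -(J1 w) := fun w => by
    rw [← e21 (J2 w), e12, map_neg, e23]
  have e31 : ∀ w, J3 (J1 w) = -(J2 w) := fun w => by
    rw [← e21 (J1 w), e11, map_neg]
  have e13 : ∀ w, J1 (J3 w) = J2 w := fun w => by
    rw [← e21 w, e12, e31, neg_neg]
  refine ⟨{
    φ1 := M.φ1.prodMap J1
    φ2 := M.φ2.prodMap J2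
    φ3 := M.φ3.prodMap J3
    ξ1 := (M.ξ1, 0)
    ξ2 := (M.ξ2, 0)
    ξ3 := (M.ξ3, 0)
    η1 := M.η1.comp (LinearMap.fst ℝ V W)
    η2 := M.η2.comp (LinearMap.fst ℝ V W)
    η3 := M.η3.comp (LinearMap.fst ℝ V W)
    sq1 := fun X => by
      simp [Prod.ext_iff, Prod.smul_def, M.sq1, e11]
    n1 := by simp [M.n1]
    sq2 := fun X => by
      simp [Prod.ext_iff, Prod.smul_def, M.sq2, e22]
    n2 := by simp [M.n2]
    sq3 := fun X => by
      simp [Prod.ext_iff, Prod.smul_def, M.sq3, e33]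
    n3 := by simp [M.n3]
    o12 := by simp [M.o12]
    o13 := by simp [M.o13]
    o21 := by simp [M.o21]
    o23 := by simp [M.o23]
    o31 := by simp [M.o31]
    o32 := by simp [M.o32]
    p12 := by simp [Prod.ext_iff, M.p12]
    p21 := by simp [Prod.ext_iff, M.p21]
    p23 := by simp [Prod.ext_iff, M.p23]
    p32 := by simp [Prod.ext_iff, M.p32]
    p31 := by simp [Prod.ext_iff, M.p31]
    p13 := by simp [Prod.ext_iff, M.p13]
    q12 := fun X => by simp [M.q12]
    q21 := fun X => by simp [M.q21]
    q23 := fun X => by simp [M.q23]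
    q32 := fun X => by simp [M.q32]
    q31 := fun X => by simp [M.q31]
    q13 := fun X => by simp [M.q13]
    r12 := fun X => by
      have := M.r12 X.1
      simp [Prod.ext_iff, Prod.smul_def, e12, this]
    r21 := fun X => by
      have := M.r21 X.1
      simp [Prod.ext_iff, Prod.smul_def, e21, this]
    r23 := fun X => by
      have := M.r23 X.1
      simp [Prod.ext_iff, Prod.smul_def, e23, this]
    r32 := fun X => by
      have := M.r32 X.1
      simp [Prod.ext_iff, Prod.smul_def, e32, this]
    r31 := fun X => by
      have := M.r31 X.1
      simp [Prod.ext_iff, Prod.smul_def, e31, this]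
    r13 := fun X => by
      have := M.r13 X.1
      simp [Prod.ext_iff, Prod.smul_def, e13, this]
  }, fun p => rfl, fun p => rfl, fun p => rfl, rfl, rfl, rfl,
    fun p => rfl, fun p => rfl, fun p => rfl⟩
end
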